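/- Let C_{Γ(LP2,ω,1)} be the class of all finite Kripke models whose frame consists of a root x and finitely many (at least one) pairwise disjoint nonempty finite sets C⁰,…,C^j not containing x, where the accessibility relation R is the reflexive relation with C^k×C^k ⊆ R for each k, x R y for every world y, and no other pairs (a root below finitely many finite clusters of final worlds). Then C_{Γ(LP2,ω,1)} enjoys 3-IP. -/

import Mathlib

/-- Modal formulas over countably many variables. -/
inductive ModalForm : Type where
  | var : ℕ → ModalForm
  | bot : ModalForm
  | and : ModalForm → ModalForm → ModalForm
  | or : ModalForm → ModalForm → ModalForm
  | not : ModalForm → ModalForm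
  | imp : ModalForm → ModalForm → ModalForm
  | box : ModalForm → ModalForm

namespace ModalForm

mutual
  /-- positively occurring variables -/
  def vpos : ModalForm → Finset ℕ
    | var p => {p}
    | bot => ∅
    | and φ ψ => vpos φ ∪ vpos ψ
    | or φ ψ => vpos φ ∪ vpos ψ
    | not φ => vneg φ
    | imp φ ψ => vneg φ ∪ vpos ψ
    | box φ => vpos φ
  /-- negatively occurring variables -/
  def vneg : ModalForm → Finset ℕ
    | var _ => ∅
    | bot => ∅
    | and φ ψ => vneg φ ∪ vneg ψ
    | or φ ψ => vneg φ ∪ vneg ψ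
    | not φ => vpos φ
    | imp φ ψ => vpos φ ∪ vneg ψ
    | box φ => vneg φ
end

/-- Modal depth: maximal nesting of `□`. -/
def depth : ModalForm → ℕ
  | var _ => 0
  | bot => 0
  | and φ ψ => max (depth φ) (depth ψ)
  | or φ ψ => max (depth φ) (depth ψ)
  | not φ => depth φ
  | imp φ ψ => max (depth φ) (depth ψ)
  | box φ => depth φ + 1

/-- `◇φ := ¬□¬φ` -/
def dia (φ : ModalForm) : ModalForm := not (box (not φ))

/-- `⊤ := ¬⊥` -/
def top : ModalForm := not bot

end ModalForm

/-- An S4 Kripke frame: nonempty set of worlds with a reflexive transitive relation. -/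
structure KFrame : Type 1 where
  W : Type
  R : W → W → Prop
  nonempty : Nonempty W
  refl : ∀ x, R x x
  trans : ∀ x y z, R x y → R y z → R x z

/-- A Kripke model: a frame with a valuation. -/
structure KModel : Type 1 extends KFrame where
  val : W → ℕ → Prop

/-- The model based on frame `F` with valuation `V`. -/
def KFrame.toModel (F : KFrame) (V : F.W → ℕ → Prop) : KModel :=
  { toKFrame := F, val := V }

/-- Satisfaction in a Kripke model. -/
def KModel.Sat (M : KModel) : M.W → ModalForm → Prop
  | w, .var p => M.val w p
  | _, .bot => False
  | w, .and φ ψ => M.Sat w φ ∧ M.Sat w ψ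
  | w, .or φ ψ => M.Sat w φ ∨ M.Sat w ψ
  | w, .not φ => ¬ M.Sat w φ
  | w, .imp φ ψ => M.Sat w φ → M.Sat w ψ
  | w, .box φ => ∀ y, M.R w y → M.Sat y φ

/-- `(M0,w0) →ₙ^{(P⁺,P⁻)} (M1,w1)`: every `(P⁺,P⁻)`-formula of depth ≤ n
satisfied at `(M0,w0)` is satisfied at `(M1,w1)`. -/
def ModalArrow (Pp Pm : Finset ℕ) (n : ℕ) (M0 : KModel) (w0 : M0.W)
    (M1 : KModel) (w1 : M1.W) : Prop :=
  ∀ φ : ModalForm, φ.vpos ⊆ Pp → φ.vneg ⊆ Pm → φ.depth ≤ n →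
    M0.Sat w0 φ → M1.Sat w1 φ

/-- p-morphism between frames. -/
def PMorphism (F G : KFrame) (f : F.W → G.W) : Prop :=
  (∀ x y, F.R x y → G.R (f x) (f y)) ∧
  (∀ x w, G.R (f x) w → ∃ z, F.R x z ∧ f z = w)

/-- The class `C` of Kripke models enjoys `n`-IP. -/
def EnjoysIP (C : Set KModel) (n : ℕ) : Prop :=
  ∀ (Pp Pm : Finset ℕ) (M0 M1 : KModel), M0 ∈ C → M1 ∈ C →
    ∀ (w0 : M0.W) (w1 : M1.W), ModalArrow Pp Pm n M0 w0 M1 w1 →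
      ∃ (F : KFrame) (wstar : F.W) (f0 : F.W → M0.W) (f1 : F.W → M1.W),
        (∀ V : F.W → ℕ → Prop, F.toModel V ∈ C) ∧
        PMorphism F M0.toKFrame f0 ∧
        PMorphism F M1.toKFrame f1 ∧
        f0 wstar = w0 ∧ f1 wstar = w1 ∧
        ∀ x : F.W, ModalArrow Pp Pm 0 M0 (f0 x) M1 (f1 x)

/-- A world is final iff every successor is also a predecessor. -/
def KModel.Final (M : KModel) (w : M.W) : Prop := ∀ y, M.R w y → M.R y w

/-- The cluster of a world. -/
def KModel.cluster (M : KModel) (w : M.W) : Set M.W := {u | M.R w u ∧ M.R u w}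

/-- Cluster `C0` of `M0` matches cluster `C1` of `M1`. -/
def Matches (Pp Pm : Finset ℕ) (M0 M1 : KModel) (C0 : Set M0.W) (C1 : Set M1.W) : Prop :=
  (∀ u0 ∈ C0, ∃ u1 ∈ C1, ModalArrow Pp Pm 0 M0 u0 M1 u1) ∧
  (∀ u1 ∈ C1, ∃ u0 ∈ C0, ModalArrow Pp Pm 0 M0 u0 M1 u1)

/-- `φ` is satisfied at every world of every model in `C`. -/
def ValidOn (C : Set KModel) (φ : ModalForm) : Prop :=
  ∀ M ∈ C, ∀ w : M.W, M.Sat w φ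

/-- The class of Γ(LP₂,ω,1) models: a root below finitely many (at least one)
nonempty finite clusters of final worlds. -/
def C_LP2o1 : Set KModel :=
  {M | Finite M.W ∧ ∃ (x : M.W) (j : ℕ) (C : Fin (j + 1) → Set M.W),
    (∀ k, x ∉ C k) ∧ (∀ k, (C k).Nonempty) ∧
    (∀ k l, k ≠ l → Disjoint (C k) (C l)) ∧
    (∀ w : M.W, w = x ∨ ∃ k, w ∈ C k) ∧
    ∀ u v : M.W, M.R u v ↔
      (u = v ∨ (∃ k, u ∈ C k ∧ v ∈ C k) ∨ u = x)}

/-!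
A model of the class is a root below final clusters, and the successors of a non-root world form
its cluster. Since `P⁺` and `P⁻` are finite, the literal type of a world is a formula, and the
depth-one formula `clusterFormula u` (`◇` of the type of each successor of `u`, `□` of the
disjunction of these types) holds at a world `v` of another model only if the successors of `u`
and of `v` match under `→₀`. Through `◇□ clusterFormula v0` and `□◇ ⋁ clusterFormula v0`, the
relation `→₃` at `(w0, w1)` therefore makes every cluster seen from `w0` match one seen from `w1`
and conversely. The amalgam is a fresh root below the `→₀`-related
pairs of worlds of matching clusters, ordered componentwise; both projections are p-morphisms.
-/

namespace ModalForm

/-- `φ` is a `(P⁺,P⁻)`-formula of modal depth at most `n`. -/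
structure InLang (Pp Pm : Finset ℕ) (n : ℕ) (φ : ModalForm) : Prop where
  vpos_subset : φ.vpos ⊆ Pp
  vneg_subset : φ.vneg ⊆ Pm
  depth_le : φ.depth ≤ n

noncomputable def bigAnd {α : Type*} (s : Finset α) (f : α → ModalForm) : ModalForm :=
  (s.toList.map f).foldr and top

noncomputable def bigOr {α : Type*} (s : Finset α) (f : α → ModalForm) : ModalForm :=
  (s.toList.map f).foldr or bot

variable {Pp Pm : Finset ℕ} {n : ℕ} {φ ψ : ModalForm}

theorem InLang.and (hφ : φ.InLang Pp Pm n) (hψ : ψ.InLang Pp Pm n) :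
    (φ.and ψ).InLang Pp Pm n :=
  ⟨Finset.union_subset hφ.1 hψ.1, Finset.union_subset hφ.2 hψ.2, max_le hφ.3 hψ.3⟩

theorem InLang.or (hφ : φ.InLang Pp Pm n) (hψ : ψ.InLang Pp Pm n) :
    (φ.or ψ).InLang Pp Pm n :=
  ⟨Finset.union_subset hφ.1 hψ.1, Finset.union_subset hφ.2 hψ.2, max_le hφ.3 hψ.3⟩

theorem InLang.box (h : φ.InLang Pp Pm n) : φ.box.InLang Pp Pm (n + 1) :=
  ⟨h.1, h.2, Nat.succ_le_succ h.3⟩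

theorem InLang.dia (h : φ.InLang Pp Pm n) : φ.dia.InLang Pp Pm (n + 1) :=
  ⟨h.1, h.2, Nat.succ_le_succ h.3⟩

theorem inLang_top : top.InLang Pp Pm n := by
  constructor <;> simp [top, vpos, vneg, depth]

theorem inLang_bot : bot.InLang Pp Pm n := by
  constructor <;> simp [vpos, vneg, depth]

theorem inLang_var {p : ℕ} (hp : p ∈ Pp) : (var p).InLang Pp Pm n := by
  constructor <;> simp [vpos, vneg, depth, hp]

theorem inLang_not_var {p : ℕ} (hp : p ∈ Pm) : (var p).not.InLang Pp Pm n := by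
  constructor <;> simp [vpos, vneg, depth, hp]

theorem InLang.bigAnd {α : Type*} {s : Finset α} {f : α → ModalForm}
    (h : ∀ a ∈ s, (f a).InLang Pp Pm n) : (bigAnd s f).InLang Pp Pm n := by
  simp only [← Finset.mem_toList] at h
  unfold ModalForm.bigAnd
  generalize s.toList = l at h ⊢
  induction l with
  | nil => exact inLang_top
  | cons a l ih => exact (h a (by simp)).and (ih fun b hb => h b (by simp [hb]))

theorem InLang.bigOr {α : Type*} {s : Finset α} {f : α → ModalForm}
    (h : ∀ a ∈ s, (f a).InLang Pp Pm n) : (bigOr s f).InLang Pp Pm n := by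
  simp only [← Finset.mem_toList] at h
  unfold ModalForm.bigOr
  generalize s.toList = l at h ⊢
  induction l with
  | nil => exact inLang_bot
  | cons a l ih => exact (h a (by simp)).or (ih fun b hb => h b (by simp [hb]))

end ModalForm

open ModalForm

namespace KModel

variable {M : KModel} {w : M.W}

theorem sat_dia {φ : ModalForm} : M.Sat w φ.dia ↔ ∃ y, M.R w y ∧ M.Sat y φ := by
  simp [dia, Sat]

theorem sat_bigAnd {α : Type*} {s : Finset α} {f : α → ModalForm} :
    M.Sat w (bigAnd s f) ↔ ∀ a ∈ s, M.Sat w (f a) := by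
  simp only [← Finset.mem_toList (s := s), bigAnd]
  induction s.toList with
  | nil => simp [top, Sat]
  | cons a l ih => simp [Sat, ih]

theorem sat_bigOr {α : Type*} {s : Finset α} {f : α → ModalForm} :
    M.Sat w (bigOr s f) ↔ ∃ a ∈ s, M.Sat w (f a) := by
  simp only [← Finset.mem_toList (s := s), bigOr]
  induction s.toList with
  | nil => simp [Sat]
  | cons a l ih => simp [Sat, ih]

end KModel

section ModalArrow

variable {Pp Pm : Finset ℕ} {m n : ℕ} {M0 M1 : KModel} {w0 : M0.W} {w1 : M1.W}

theorem ModalArrow.sat (h : ModalArrow Pp Pm n M0 w0 M1 w1) {φ : ModalForm}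
    (hφ : φ.InLang Pp Pm n) : M0.Sat w0 φ → M1.Sat w1 φ :=
  h φ hφ.vpos_subset hφ.vneg_subset hφ.depth_le

theorem ModalArrow.mono (h : ModalArrow Pp Pm n M0 w0 M1 w1) (hmn : m ≤ n) :
    ModalArrow Pp Pm m M0 w0 M1 w1 :=
  fun φ hp hn hd => h φ hp hn (hd.trans hmn)

theorem ModalArrow.of_val (hpos : ∀ p ∈ Pp, M0.val w0 p → M1.val w1 p)
    (hneg : ∀ p ∈ Pm, M1.val w1 p → M0.val w0 p) : ModalArrow Pp Pm 0 M0 w0 M1 w1 := by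
  -- negation swaps the roles of `P⁺` and `P⁻`, so both transfer directions are proved together
  suffices ∀ φ : ModalForm, φ.depth = 0 →
      (φ.vpos ⊆ Pp → φ.vneg ⊆ Pm → M0.Sat w0 φ → M1.Sat w1 φ) ∧
      (φ.vpos ⊆ Pm → φ.vneg ⊆ Pp → M1.Sat w1 φ → M0.Sat w0 φ) from
    fun φ hp hn hd => (this φ (Nat.le_zero.1 hd)).1 hp hn
  intro φ
  induction φ with
  | box φ _ => simp [depth]
  | _ =>
    simp only [vpos, vneg, depth, KModel.Sat, Finset.union_subset_iff, Nat.max_eq_zero_iff] at *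
    aesop

end ModalArrow

namespace KModel

variable (M : KModel) (Pp Pm : Finset ℕ)

open scoped Classical in
noncomputable def typeFormula (u : M.W) : ModalForm :=
  .and (bigAnd (Pp.filter (M.val u ·)) var)
    (bigAnd (Pm.filter (¬ M.val u ·)) fun p => (var p).not)

noncomputable def succs [Finite M.W] (u : M.W) : Finset M.W :=
  (Set.toFinite {v | M.R u v}).toFinset

noncomputable def clusterFormula [Finite M.W] (u : M.W) : ModalForm :=
  .and (bigAnd (M.succs u) fun v => (M.typeFormula Pp Pm v).dia)
    (bigOr (M.succs u) (M.typeFormula Pp Pm)).box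

variable {M Pp Pm}

@[simp]
theorem mem_succs [Finite M.W] {u v : M.W} : v ∈ M.succs u ↔ M.R u v :=
  Set.Finite.mem_toFinset _

open scoped Classical in
theorem typeFormula_inLang (u : M.W) : (M.typeFormula Pp Pm u).InLang Pp Pm 0 :=
  .and (.bigAnd fun _ hp => inLang_var (Finset.filter_subset _ _ hp))
    (.bigAnd fun _ hp => inLang_not_var (Finset.filter_subset _ _ hp))

theorem sat_typeFormula_iff {u : M.W} {N : KModel} {v : N.W} :
    N.Sat v (M.typeFormula Pp Pm u) ↔
      (∀ p ∈ Pp, M.val u p → N.val v p) ∧ (∀ p ∈ Pm, N.val v p → M.val u p) := by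
  simp only [typeFormula, Sat, sat_bigAnd, Finset.mem_filter, and_imp]
  exact and_congr Iff.rfl (forall₂_congr fun p _ => by tauto)

theorem sat_typeFormula_self (u : M.W) : M.Sat u (M.typeFormula Pp Pm u) :=
  sat_typeFormula_iff.2 ⟨fun _ _ => id, fun _ _ => id⟩

theorem clusterFormula_inLang [Finite M.W] (u : M.W) :
    (M.clusterFormula Pp Pm u).InLang Pp Pm 1 :=
  .and (.bigAnd fun v _ => (typeFormula_inLang v).dia)
    ((InLang.bigOr fun v _ => typeFormula_inLang v).box)

theorem sat_clusterFormula [Finite M.W] {u v : M.W} (huv : M.R u v) (hvu : M.R v u) :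
    M.Sat v (M.clusterFormula Pp Pm u) := by
  refine ⟨sat_bigAnd.2 fun y hy => sat_dia.2 ⟨y, ?_, sat_typeFormula_self y⟩,
    fun y hvy => sat_bigOr.2 ⟨y, ?_, sat_typeFormula_self y⟩⟩
  · exact M.trans _ _ _ hvu (mem_succs.1 hy)
  · exact mem_succs.2 (M.trans _ _ _ huv hvy)

end KModel

theorem ModalArrow.of_sat_typeFormula {Pp Pm : Finset ℕ} {M0 M1 : KModel} {u0 : M0.W}
    {u1 : M1.W} (h : M1.Sat u1 (M0.typeFormula Pp Pm u0)) : ModalArrow Pp Pm 0 M0 u0 M1 u1 :=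
  .of_val (KModel.sat_typeFormula_iff.1 h).1 (KModel.sat_typeFormula_iff.1 h).2

theorem matches_of_sat_clusterFormula {Pp Pm : Finset ℕ} {M0 M1 : KModel} [Finite M0.W]
    {u0 : M0.W} {u1 : M1.W} (h : M1.Sat u1 (M0.clusterFormula Pp Pm u0)) :
    Matches Pp Pm M0 M1 {v | M0.R u0 v} {v | M1.R u1 v} := by
  obtain ⟨hdia, hbox⟩ := h
  constructor
  · intro v0 hv0
    obtain ⟨v1, hv1, hsat⟩ :=
      KModel.sat_dia.1 (KModel.sat_bigAnd.1 hdia v0 (KModel.mem_succs.2 hv0))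
    exact ⟨v1, hv1, .of_sat_typeFormula hsat⟩
  · intro v1 hv1
    obtain ⟨v0, hv0, hsat⟩ := KModel.sat_bigOr.1 (hbox v1 hv1)
    exact ⟨v0, KModel.mem_succs.1 hv0, .of_sat_typeFormula hsat⟩

structure KFrame.IsRootOverFinalClusters (F : KFrame) (x : F.W) : Prop where
  rel_of_root : ∀ y, F.R x y
  symm_of_ne_root : ∀ u, u ≠ x → ∀ v, F.R u v → F.R v u
  not_rel_root : ∀ u, u ≠ x → ¬ F.R u x
  exists_ne_root : ∃ u, u ≠ x

namespace KFrame.IsRootOverFinalClusters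

variable {F : KFrame} {x : F.W} (h : F.IsRootOverFinalClusters x) {u v : F.W}
include h

theorem ne_root_of_rel (hu : u ≠ x) (huv : F.R u v) : v ≠ x :=
  fun hv => h.not_rel_root u hu (hv ▸ huv)

theorem succ_eq (hu : u ≠ x) (huv : F.R u v) : {y | F.R v y} = {y | F.R u y} :=
  Set.ext fun _ => ⟨F.trans _ _ _ huv, F.trans _ _ _ (h.symm_of_ne_root u hu v huv)⟩

theorem exists_ne_root_rel (y : F.W) : ∃ v, v ≠ x ∧ F.R y v := by
  by_cases hy : y = x
  · obtain ⟨v, hv⟩ := h.exists_ne_root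
    exact ⟨v, hv, hy ▸ h.rel_of_root v⟩
  · exact ⟨y, hy, F.refl y⟩

theorem eq_or_ne_root_of_rel (huv : F.R u v) : v = u ∨ v ≠ x := by
  by_cases hu : u = x
  · by_cases hv : v = x
    · exact .inl (hv.trans hu.symm)
    · exact .inr hv
  · exact .inr (h.ne_root_of_rel hu huv)

end KFrame.IsRootOverFinalClusters

theorem isRootOverFinalClusters_of_mem_C_LP2o1 {M : KModel} (hM : M ∈ C_LP2o1) :
    ∃ x, M.IsRootOverFinalClusters x := by
  obtain ⟨-, x, j, C, hx, hne, -, -, hR⟩ := hM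
  refine ⟨x, fun y => (hR x y).2 (.inr (.inr rfl)), fun u hu v huv => ?_,
    fun u hu hux => ?_, ?_⟩
  · rcases (hR u v).1 huv with rfl | ⟨k, huk, hvk⟩ | rfl
    · exact M.refl u
    · exact (hR v u).2 (.inr (.inl ⟨k, hvk, huk⟩))
    · exact absurd rfl hu
  · rcases (hR u x).1 hux with rfl | ⟨k, -, hxk⟩ | rfl
    · exact hu rfl
    · exact hx k hxk
    · exact hu rfl
  · obtain ⟨u, hu⟩ := hne 0
    exact ⟨u, fun hux => hx 0 (hux ▸ hu)⟩

theorem mem_C_LP2o1_of_isRootOverFinalClusters {M : KModel} [Finite M.W] {x : M.W}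
    (h : M.IsRootOverFinalClusters x) : M ∈ C_LP2o1 := by
  -- the clusters are the successor sets of the non-root worlds, enumerated through `e`
  set Q : Set (Set M.W) := {c | ∃ u, u ≠ x ∧ c = {v | M.R u v}}
  obtain ⟨n, ⟨e⟩⟩ := Finite.exists_equiv_fin Q
  obtain ⟨u0, hu0⟩ := h.exists_ne_root
  obtain ⟨j, rfl⟩ : ∃ j, n = j + 1 :=
    Nat.exists_eq_succ_of_ne_zero fun hn => (hn ▸ e ⟨_, u0, hu0, rfl⟩).elim0
  set C : Fin (j + 1) → Set M.W := fun k => (e.symm k).1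
  have hC : ∀ k, ∃ u, u ≠ x ∧ C k = {v | M.R u v} := fun k => (e.symm k).2
  have hC_e : ∀ u (hu : u ≠ x), C (e ⟨_, u, hu, rfl⟩) = {v | M.R u v} := by simp [C]
  refine ⟨‹_›, x, j, C, fun k hxk => ?_, fun k => ?_, fun k l hkl => ?_, fun w => ?_,
    fun u v => ⟨fun huv => ?_, ?_⟩⟩
  · obtain ⟨u, hu, hCk⟩ := hC k
    rw [hCk] at hxk
    exact h.not_rel_root u hu hxk
  · obtain ⟨u, hu, hCk⟩ := hC k
    exact ⟨u, hCk ▸ M.refl u⟩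
  · refine Set.disjoint_left.2 fun v hvk hvl => hkl (e.symm.injective (Subtype.ext ?_))
    obtain ⟨u, hu, hCk⟩ := hC k
    obtain ⟨u', hu', hCl⟩ := hC l
    rw [hCk] at hvk
    rw [hCl] at hvl
    change C k = C l
    rw [hCk, hCl, ← h.succ_eq hu hvk, h.succ_eq hu' hvl]
  · by_cases hw : w = x
    · exact .inl hw
    · exact .inr ⟨e ⟨_, w, hw, rfl⟩, by rw [hC_e _ hw]; exact M.refl w⟩
  · by_cases hu : u = x
    · exact .inr (.inr hu)
    · refine .inr (.inl ⟨e ⟨_, u, hu, rfl⟩, ?_, ?_⟩) <;> rw [hC_e _ hu]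
      exacts [M.refl u, huv]
  · rintro (rfl | ⟨k, huk, hvk⟩ | rfl)
    · exact M.refl u
    · obtain ⟨u', hu', hCk⟩ := hC k
      rw [hCk] at huk hvk
      exact M.trans _ _ _ (h.symm_of_ne_root u' hu' u huk) hvk
    · exact h.rel_of_root v

namespace KFrame

variable (F0 F1 : KFrame) (Z : Set (F0.W × F1.W))

def rootedProductRel : Option Z → Option Z → Prop
  | none, _ => True
  | some _, none => False
  | some a, some b => F0.R a.1.1 b.1.1 ∧ F1.R a.1.2 b.1.2

def rootedProduct : KFrame where
  W := Option Z
  R := rootedProductRel F0 F1 Z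
  nonempty := ⟨none⟩
  refl := by
    rintro (_ | a)
    exacts [trivial, ⟨F0.refl _, F1.refl _⟩]
  trans := by
    rintro (_ | a) (_ | b) (_ | c) hab hbc
    all_goals first
      | trivial | exact hab.elim | exact hbc.elim
      | exact ⟨F0.trans _ _ _ hab.1 hbc.1, F1.trans _ _ _ hab.2 hbc.2⟩

variable {F0 F1 Z}

theorem isRootOverFinalClusters_rootedProduct (hZ : Z.Nonempty)
    (hfinal : ∀ a ∈ Z,
      (∀ v, F0.R a.1 v → F0.R v a.1) ∧ (∀ v, F1.R a.2 v → F1.R v a.2)) :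
    (rootedProduct F0 F1 Z).IsRootOverFinalClusters none where
  rel_of_root _ := trivial
  symm_of_ne_root := by
    rintro (_ | a) ha (_ | b) hab
    exacts [absurd rfl ha, absurd rfl ha, hab.elim,
      ⟨(hfinal a a.2).1 _ hab.1, (hfinal a a.2).2 _ hab.2⟩]
  not_rel_root := by
    rintro (_ | a) ha hab
    exacts [ha rfl, hab]
  exists_ne_root := ⟨some ⟨hZ.some, hZ.some_mem⟩, Option.some_ne_none _⟩

theorem pMorphism_rootedProduct_fst {w0 : F0.W} (hroot : ∀ a ∈ Z, F0.R w0 a.1)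
    (hback_root : ∀ v, F0.R w0 v → v = w0 ∨ ∃ a ∈ Z, a.1 = v)
    (hback : ∀ a ∈ Z, ∀ v, F0.R a.1 v → ∃ b ∈ Z, b.1 = v ∧ F1.R a.2 b.2) :
    PMorphism (rootedProduct F0 F1 Z) F0 (Option.elim · w0 (·.1.1)) := by
  refine ⟨?_, ?_⟩
  · rintro (_ | a) (_ | b) hab
    exacts [F0.refl w0, hroot b b.2, hab.elim, hab.1]
  · rintro (_ | a) v hv
    · rcases hback_root v hv with rfl | ⟨b, hb, rfl⟩
      exacts [⟨none, trivial, rfl⟩, ⟨some ⟨b, hb⟩, trivial, rfl⟩]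
    · obtain ⟨b, hb, rfl, hab⟩ := hback a a.2 v hv
      exact ⟨some ⟨b, hb⟩, ⟨hv, hab⟩, rfl⟩

theorem pMorphism_rootedProduct_snd {w1 : F1.W} (hroot : ∀ a ∈ Z, F1.R w1 a.2)
    (hback_root : ∀ v, F1.R w1 v → v = w1 ∨ ∃ a ∈ Z, a.2 = v)
    (hback : ∀ a ∈ Z, ∀ v, F1.R a.2 v → ∃ b ∈ Z, b.2 = v ∧ F0.R a.1 b.1) :
    PMorphism (rootedProduct F0 F1 Z) F1 (Option.elim · w1 (·.1.2)) := by
  refine ⟨?_, ?_⟩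
  · rintro (_ | a) (_ | b) hab
    exacts [F1.refl w1, hroot b b.2, hab.elim, hab.2]
  · rintro (_ | a) v hv
    · rcases hback_root v hv with rfl | ⟨b, hb, rfl⟩
      exacts [⟨none, trivial, rfl⟩, ⟨some ⟨b, hb⟩, trivial, rfl⟩]
    · obtain ⟨b, hb, rfl, hab⟩ := hback a a.2 v hv
      exact ⟨some ⟨b, hb⟩, ⟨hab, hv⟩, rfl⟩

end KFrame

section Amalgam

variable {Pp Pm : Finset ℕ} {M0 M1 : KModel} {x0 w0 : M0.W} {x1 w1 : M1.W}

def amalgamPairs (Pp Pm : Finset ℕ) (x0 w0 : M0.W) (x1 w1 : M1.W) : Set (M0.W × M1.W) :=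
  {a | a.1 ≠ x0 ∧ a.2 ≠ x1 ∧ M0.R w0 a.1 ∧ M1.R w1 a.2 ∧
    ModalArrow Pp Pm 0 M0 a.1 M1 a.2 ∧ Matches Pp Pm M0 M1 {u | M0.R a.1 u} {u | M1.R a.2 u}}

theorem exists_snd_mem_amalgamPairs (h1 : M1.IsRootOverFinalClusters x1) {v0 : M0.W}
    {v1 : M1.W} (hv0 : v0 ≠ x0) (hv1 : v1 ≠ x1) (hw0 : M0.R w0 v0) (hw1 : M1.R w1 v1)
    (hm : Matches Pp Pm M0 M1 {u | M0.R v0 u} {u | M1.R v1 u}) :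
    ∃ u1, M1.R v1 u1 ∧ (v0, u1) ∈ amalgamPairs Pp Pm x0 w0 x1 w1 := by
  obtain ⟨u1, hu1, harr⟩ := hm.1 v0 (M0.refl v0)
  refine ⟨u1, hu1, hv0, h1.ne_root_of_rel hv1 hu1, hw0, M1.trans _ _ _ hw1 hu1, harr, ?_⟩
  rwa [h1.succ_eq hv1 hu1]

theorem exists_fst_mem_amalgamPairs (h0 : M0.IsRootOverFinalClusters x0) {v0 : M0.W}
    {v1 : M1.W} (hv0 : v0 ≠ x0) (hv1 : v1 ≠ x1) (hw0 : M0.R w0 v0) (hw1 : M1.R w1 v1)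
    (hm : Matches Pp Pm M0 M1 {u | M0.R v0 u} {u | M1.R v1 u}) :
    ∃ u0, M0.R v0 u0 ∧ (u0, v1) ∈ amalgamPairs Pp Pm x0 w0 x1 w1 := by
  obtain ⟨u0, hu0, harr⟩ := hm.2 v1 (M1.refl v1)
  refine ⟨u0, hu0, h0.ne_root_of_rel hv0 hu0, hv1, M0.trans _ _ _ hw0 hu0, hw1, harr, ?_⟩
  rwa [h0.succ_eq hv0 hu0]

theorem exists_amalgam [Finite M0.W] [Finite M1.W]
    (h0 : M0.IsRootOverFinalClusters x0) (h1 : M1.IsRootOverFinalClusters x1)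
    (harr : ModalArrow Pp Pm 0 M0 w0 M1 w1)
    (hzig : ∀ v0, v0 ≠ x0 → M0.R w0 v0 → ∃ v1, v1 ≠ x1 ∧ M1.R w1 v1 ∧
      Matches Pp Pm M0 M1 {u | M0.R v0 u} {u | M1.R v1 u})
    (hzag : ∀ v1, v1 ≠ x1 → M1.R w1 v1 → ∃ v0, v0 ≠ x0 ∧ M0.R w0 v0 ∧
      Matches Pp Pm M0 M1 {u | M0.R v0 u} {u | M1.R v1 u}) :
    ∃ (F : KFrame) (wstar : F.W) (f0 : F.W → M0.W) (f1 : F.W → M1.W),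
      (∀ V : F.W → ℕ → Prop, F.toModel V ∈ C_LP2o1) ∧
      PMorphism F M0.toKFrame f0 ∧ PMorphism F M1.toKFrame f1 ∧
      f0 wstar = w0 ∧ f1 wstar = w1 ∧
      ∀ x : F.W, ModalArrow Pp Pm 0 M0 (f0 x) M1 (f1 x) := by
  set Z := amalgamPairs Pp Pm x0 w0 x1 w1
  have hZ : Z.Nonempty := by
    obtain ⟨v0, hv0, hw0⟩ := h0.exists_ne_root_rel w0
    obtain ⟨v1, hv1, hw1, hm⟩ := hzig v0 hv0 hw0
    obtain ⟨u1, -, hZ⟩ := exists_snd_mem_amalgamPairs h1 hv0 hv1 hw0 hw1 hm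
    exact ⟨_, hZ⟩
  refine ⟨KFrame.rootedProduct M0.toKFrame M1.toKFrame Z, none, _, _, fun V => ?_,
    KFrame.pMorphism_rootedProduct_fst (fun a ha => ha.2.2.1) (fun v hv => ?_) ?_,
    KFrame.pMorphism_rootedProduct_snd (fun a ha => ha.2.2.2.1) (fun v hv => ?_) ?_,
    rfl, rfl, ?_⟩
  · set M := (KFrame.rootedProduct M0.toKFrame M1.toKFrame Z).toModel V
    have : Finite M.W := inferInstanceAs (Finite (Option Z))
    exact mem_C_LP2o1_of_isRootOverFinalClusters (M := M)
      (KFrame.isRootOverFinalClusters_rootedProduct hZ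
        fun a ha => ⟨h0.symm_of_ne_root _ ha.1, h1.symm_of_ne_root _ ha.2.1⟩)
  · refine (h0.eq_or_ne_root_of_rel hv).imp_right fun hv0 => ?_
    obtain ⟨v1, hv1, hw1, hm⟩ := hzig v hv0 hv
    obtain ⟨u1, -, hZ⟩ := exists_snd_mem_amalgamPairs h1 hv0 hv1 hv hw1 hm
    exact ⟨_, hZ, rfl⟩
  · rintro ⟨a0, a1⟩ ⟨ha0, ha1, hw0, hw1, -, hm⟩ v hv
    have hv0 := h0.ne_root_of_rel ha0 hv
    rw [← h0.succ_eq ha0 hv] at hm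
    obtain ⟨u1, hu1, hZ⟩ :=
      exists_snd_mem_amalgamPairs h1 hv0 ha1 (M0.trans _ _ _ hw0 hv) hw1 hm
    exact ⟨_, hZ, rfl, hu1⟩
  · refine (h1.eq_or_ne_root_of_rel hv).imp_right fun hv1 => ?_
    obtain ⟨v0, hv0, hw0, hm⟩ := hzag v hv1 hv
    obtain ⟨u0, -, hZ⟩ := exists_fst_mem_amalgamPairs h0 hv0 hv1 hw0 hv hm
    exact ⟨_, hZ, rfl⟩
  · rintro ⟨a0, a1⟩ ⟨ha0, ha1, hw0, hw1, -, hm⟩ v hv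
    have hv1 := h1.ne_root_of_rel ha1 hv
    rw [← h1.succ_eq ha1 hv] at hm
    obtain ⟨u0, hu0, hZ⟩ :=
      exists_fst_mem_amalgamPairs h0 ha0 hv1 hw0 (M1.trans _ _ _ hw1 hv) hm
    exact ⟨_, hZ, rfl, hu0⟩
  · rintro (_ | ⟨a, -, -, -, -, ha, -⟩)
    exacts [harr, ha]

end Amalgam

section ZigZag

variable {Pp Pm : Finset ℕ} {M0 M1 : KModel} [Finite M0.W] {x0 w0 : M0.W} {x1 w1 : M1.W}
  (h0 : M0.IsRootOverFinalClusters x0) (h1 : M1.IsRootOverFinalClusters x1)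
  (h : ModalArrow Pp Pm 3 M0 w0 M1 w1)
include h0 h1 h

theorem zig_of_modalArrow_three {v0 : M0.W} (hv0 : v0 ≠ x0) (hw0 : M0.R w0 v0) :
    ∃ v1, v1 ≠ x1 ∧ M1.R w1 v1 ∧ Matches Pp Pm M0 M1 {u | M0.R v0 u} {u | M1.R v1 u} := by
  have hsat : M1.Sat w1 (M0.clusterFormula Pp Pm v0).box.dia :=
    h.sat (KModel.clusterFormula_inLang v0).box.dia <| KModel.sat_dia.2
      ⟨v0, hw0, fun y hy => KModel.sat_clusterFormula hy (h0.symm_of_ne_root v0 hv0 y hy)⟩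
  obtain ⟨y, hw1y, hy⟩ := KModel.sat_dia.1 hsat
  obtain ⟨v1, hv1, hyv1⟩ := h1.exists_ne_root_rel y
  exact ⟨v1, hv1, M1.trans _ _ _ hw1y hyv1, matches_of_sat_clusterFormula (hy v1 hyv1)⟩

theorem zag_of_modalArrow_three {v1 : M1.W} (hv1 : v1 ≠ x1) (hw1 : M1.R w1 v1) :
    ∃ v0, v0 ≠ x0 ∧ M0.R w0 v0 ∧ Matches Pp Pm M0 M1 {u | M0.R v0 u} {u | M1.R v1 u} := by
  set S : Finset M0.W := (Set.toFinite {v | v ≠ x0 ∧ M0.R w0 v}).toFinset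
  have hsat : M1.Sat w1 (bigOr S (M0.clusterFormula Pp Pm)).dia.box := by
    refine h.sat (InLang.bigOr fun v _ => KModel.clusterFormula_inLang v).dia.box fun y hy => ?_
    obtain ⟨v, hv, hyv⟩ := h0.exists_ne_root_rel y
    refine KModel.sat_dia.2 ⟨v, hyv, KModel.sat_bigOr.2 ⟨v, ?_, ?_⟩⟩
    · simpa [S] using ⟨hv, M0.trans _ _ _ hy hyv⟩
    · exact KModel.sat_clusterFormula (M0.refl v) (M0.refl v)
  obtain ⟨y, hv1y, hy⟩ := KModel.sat_dia.1 (hsat v1 hw1)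
  obtain ⟨v0, hv0S, hv0⟩ := KModel.sat_bigOr.1 hy
  rw [Set.Finite.mem_toFinset] at hv0S
  refine ⟨v0, hv0S.1, hv0S.2, ?_⟩
  rw [← h1.succ_eq hv1 hv1y]
  exact matches_of_sat_clusterFormula hv0

end ZigZag

theorem stmt17 : EnjoysIP C_LP2o1 3 := by
  intro Pp Pm M0 M1 hM0 hM1 w0 w1 h
  have : Finite M0.W := hM0.1
  have : Finite M1.W := hM1.1
  obtain ⟨x0, h0⟩ := isRootOverFinalClusters_of_mem_C_LP2o1 hM0
  obtain ⟨x1, h1⟩ := isRootOverFinalClusters_of_mem_C_LP2o1 hM1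
  exact exists_amalgam h0 h1 (h.mono (by norm_num))
    (fun _ hv0 hw0 => zig_of_modalArrow_three h0 h1 h hv0 hw0)
    (fun _ hv1 hw1 => zag_of_modalArrow_three h0 h1 h hv1 hw1)
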